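/- arXiv:1512.02285 — 4 statements merged into one kernel-verified Lean document; each statement's English description precedes it below -/
import Mathlib

section
/- Let 0 < α < 1 and let F be α-SR with differentiable density f and with finite mean. If v₁ and v₂ are independent random variables each with distribution F, then E[max{v₁, v₂}] ≤ ((2+α)/α) · E[min{v₁, v₂}]. Equivalently, ∫₀^∞ (1 − F(x)²) dx ≤ ((2+α)/α) · ∫₀^∞ (1 − F(x))² dx. -/
/-!
Write `G = 1 - F`. The claim is equivalent to `∫ G ≤ (1 + α)/α · ∫ G²`, i.e. to `∫ c ≥ 0` for
`c = (1 + α)/α · G² - G`. Where `G > 0` we can factor `c = M · f · Φ'(G)` with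
`Φ(q) = q^α (q - 1)/α` (`potential`) and `M = (G/f) · G^(1-α)` (`weight`). Strong regularity
says that the inverse hazard rate `G/f` has slope at most `1 - α`, which makes `M` nonincreasing,
while `Φ'(G)` changes sign from `+` to `-` exactly once, at the point `s` where
`G(s) = α/(1 + α)`. Hence `c ≥ M(s) · f · Φ'(G) = -M(s) · (Φ ∘ G)'`, and integrating over
`(0, ∞)` gives `∫ c ≥ M(s) · (Φ(1) - Φ(0)) = 0`.
-/

open MeasureTheory Real Filter

/-- The virtual valuation function `φ(v) = v − (1 − F(v))/f(v)`. -/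
noncomputable def virtualValue (F f : ℝ → ℝ) (v : ℝ) : ℝ := v - (1 - F v) / f v

/-- The hazard rate `h(v) = f(v)/(1 − F(v))`. -/
noncomputable def hazardRate (F f : ℝ → ℝ) (v : ℝ) : ℝ := f v / (1 - F v)

/-- `F` is the CDF of a continuous distribution supported on `[0, ∞)`,
with density `f = F'` that is positive wherever `F < 1`. -/
structure IsCDF (F f : ℝ → ℝ) : Prop where
  zero : F 0 = 0
  mono : Monotone F
  le_one : ∀ v, F v ≤ 1
  tendsto_one : Tendsto F atTop (nhds 1)
  hasDeriv : ∀ v, 0 ≤ v → HasDerivAt F (f v) v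
  f_pos : ∀ v, 0 ≤ v → F v < 1 → 0 < f v

/-- `F` is `α`-strongly regular: `φ(y) − φ(x) ≥ α (y − x)` for all `x < y` in the support. -/
def IsAlphaSR (α : ℝ) (F f : ℝ → ℝ) : Prop :=
  ∀ x y, 0 ≤ x → x < y → F y < 1 →
    virtualValue F f y - virtualValue F f x ≥ α * (y - x)

open Set Topology

noncomputable def potential (α q : ℝ) : ℝ := q ^ α * (q - 1) / α

noncomputable def potentialDeriv (α q : ℝ) : ℝ := q ^ (α - 1) * ((1 + α) * q - α) / α

noncomputable def weight (α : ℝ) (F f : ℝ → ℝ) (v : ℝ) : ℝ :=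
  (1 - F v) / f v * (1 - F v) ^ (1 - α)

section Potential

variable {α q : ℝ}

lemma hasDerivAt_potential (hq : 0 < q) :
    HasDerivAt (potential α) (potentialDeriv α q) q := by
  have hpow : q ^ α = q ^ (α - 1) * q := by
    rw [← Real.rpow_add_one hq.ne', sub_add_cancel]
  refine ((((hasDerivAt_id q).rpow_const (p := α) (Or.inl hq.ne')).mul
    ((hasDerivAt_id q).sub_const 1)).div_const α).congr_deriv ?_
  simp only [potentialDeriv, id, hpow]
  ring

lemma continuous_potential (hα : 0 ≤ α) : Continuous (potential α) :=
  ((Real.continuous_rpow_const hα).mul (continuous_id.sub continuous_const)).div_const α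

lemma potential_zero (hα : α ≠ 0) : potential α 0 = 0 := by
  simp [potential, Real.zero_rpow hα]

lemma potential_one : potential α 1 = 0 := by
  simp [potential]

lemma potentialDeriv_nonneg (hα : 0 < α) (hq : 0 ≤ q) (h : α ≤ (1 + α) * q) :
    0 ≤ potentialDeriv α q :=
  div_nonneg (mul_nonneg (Real.rpow_nonneg hq _) (sub_nonneg.2 h)) hα.le

lemma potentialDeriv_nonpos (hα : 0 < α) (hq : 0 ≤ q) (h : (1 + α) * q ≤ α) :
    potentialDeriv α q ≤ 0 :=
  div_nonpos_of_nonpos_of_nonneg (mul_nonpos_of_nonneg_of_nonpos (Real.rpow_nonneg hq _)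
    (sub_nonpos.2 h)) hα.le

end Potential

namespace IsCDF

variable {F f : ℝ → ℝ} {v : ℝ}

lemma continuousAt (hcdf : IsCDF F f) (hv : 0 ≤ v) : ContinuousAt F v :=
  (hcdf.hasDeriv v hv).continuousAt

lemma continuousOn (hcdf : IsCDF F f) : ContinuousOn F (Ici 0) := fun _ hv =>
  (hcdf.continuousAt hv).continuousWithinAt

lemma nonneg (hcdf : IsCDF F f) (hv : 0 ≤ v) : 0 ≤ F v :=
  hcdf.zero.symm.trans_le (hcdf.mono hv)

lemma nonneg_of_eq_one (hcdf : IsCDF F f) (hv : F v = 1) : 0 ≤ v :=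
  le_of_not_gt fun h => by linarith [(hcdf.mono h.le).trans_eq hcdf.zero]

lemma exists_eq (hcdf : IsCDF F f) {p : ℝ} (hp0 : 0 ≤ p) (hp1 : p < 1) :
    ∃ s, 0 ≤ s ∧ F s = p := by
  obtain ⟨N, hN, hN0⟩ :=
    ((hcdf.tendsto_one.eventually (eventually_gt_nhds hp1)).and (eventually_ge_atTop 0)).exists
  obtain ⟨s, hs, hFs⟩ := intermediate_value_Icc hN0 (hcdf.continuousOn.mono Icc_subset_Ici_self)
    ⟨hcdf.zero.symm ▸ hp0, hN.le⟩
  exact ⟨s, hs.1, hFs⟩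

lemma exists_first_eq_one (hcdf : IsCDF F f) (hv : F v = 1) :
    ∃ c ≤ v, F c = 1 ∧ ∀ w < c, F w < 1 := by
  set S := Ici 0 ∩ F ⁻¹' {1}
  have hvS : v ∈ S := ⟨hcdf.nonneg_of_eq_one hv, hv⟩
  have hS : IsClosed S :=
    hcdf.continuousOn.preimage_isClosed_of_isClosed isClosed_Ici isClosed_singleton
  have hbdd : BddBelow S := ⟨0, fun _ hw => hw.1⟩
  obtain ⟨-, hFc⟩ := hS.csInf_mem ⟨v, hvS⟩ hbdd
  refine ⟨sInf S, csInf_le hbdd hvS, hFc, fun w hw => (hcdf.le_one w).lt_of_ne fun hFw => ?_⟩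
  exact (csInf_le hbdd ⟨hcdf.nonneg_of_eq_one hFw, hFw⟩).not_gt hw

lemma integrableOn_sq (hcdf : IsCDF F f) (hmean : IntegrableOn (fun v => 1 - F v) (Ioi 0)) :
    IntegrableOn (fun v => (1 - F v) ^ 2) (Ioi 0) := by
  refine hmean.mono' ((measurable_const.sub hcdf.mono.measurable).pow_const 2).aestronglyMeasurable
    ((ae_restrict_iff' measurableSet_Ioi).2 (Eventually.of_forall fun v hv => ?_))
  have h0 := hcdf.nonneg (le_of_lt hv)
  have h1 := hcdf.le_one v
  rw [Real.norm_eq_abs, abs_of_nonneg (sq_nonneg _)]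
  nlinarith

lemma weight_mul_potentialDeriv {α : ℝ} (hcdf : IsCDF F f) (hα : α ≠ 0) (hv : 0 ≤ v)
    (hFv : F v < 1) :
    weight α F f v * (f v * potentialDeriv α (1 - F v)) =
      (1 + α) / α * (1 - F v) ^ 2 - (1 - F v) := by
  have hG : 0 < 1 - F v := sub_pos.2 hFv
  have hf : f v ≠ 0 := (hcdf.f_pos v hv hFv).ne'
  have hpow : (1 - F v) ^ (1 - α) * (1 - F v) ^ (α - 1) = 1 := by
    rw [← Real.rpow_add hG]; norm_num
  calc weight α F f v * (f v * potentialDeriv α (1 - F v))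
      = (1 - F v) / f v * f v * ((1 - F v) ^ (1 - α) * (1 - F v) ^ (α - 1))
          * ((1 + α) * (1 - F v) - α) / α := by
        simp only [weight, potentialDeriv]; ring
    _ = (1 + α) / α * (1 - F v) ^ 2 - (1 - F v) := by
        rw [div_mul_cancel₀ _ hf, hpow]; field_simp

end IsCDF

namespace IsAlphaSR

variable {α : ℝ} {F f : ℝ → ℝ} {v s b : ℝ}

lemma sub_le (hSR : IsAlphaSR α F f) {x y : ℝ} (hx : 0 ≤ x) (hxy : x < y) (hy : F y < 1) :
    (1 - F y) / f y - (1 - F x) / f x ≤ (1 - α) * (y - x) := by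
  have h := hSR x y hx hxy hy
  unfold virtualValue at h
  linarith

lemma le_of_hasDerivAt (hSR : IsAlphaSR α F f) (hcdf : IsCDF F f) (hv : 0 ≤ v) (hFv : F v < 1)
    {ρ : ℝ} (hρ : HasDerivAt (fun w => (1 - F w) / f w) ρ v) : ρ ≤ 1 - α := by
  have hslope : Tendsto (slope (fun w => (1 - F w) / f w) v) (𝓝[>] v) (𝓝 ρ) :=
    hρ.tendsto_slope.mono_left (nhdsWithin_mono v fun _ hw => ne_of_gt hw)
  have hlt : ∀ᶠ w in 𝓝[>] v, F w < 1 :=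
    ((hcdf.continuousAt hv).eventually_lt_const hFv).filter_mono nhdsWithin_le_nhds
  refine le_of_tendsto hslope ?_
  filter_upwards [hlt, self_mem_nhdsWithin] with w hFw hvw
  rw [slope_def_field, div_le_iff₀ (sub_pos.2 hvw)]
  exact hSR.sub_le hv hvw hFw

lemma exists_hasDerivAt_weight_nonpos (hSR : IsAlphaSR α F f) (hcdf : IsCDF F f)
    (hfd : DifferentiableAt ℝ f v) (hv : 0 ≤ v) (hFv : F v < 1) :
    ∃ m ≤ 0, HasDerivAt (weight α F f) m v := by
  have hG : 0 < 1 - F v := sub_pos.2 hFv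
  have hf : f v ≠ 0 := (hcdf.f_pos v hv hFv).ne'
  have hG' : HasDerivAt (fun w => 1 - F w) (-f v) v := (hcdf.hasDeriv v hv).const_sub 1
  obtain ⟨ρ, hr⟩ : ∃ ρ, HasDerivAt (fun w => (1 - F w) / f w) ρ v :=
    ⟨_, hG'.div hfd.hasDerivAt hf⟩
  have hρ := hSR.le_of_hasDerivAt hcdf hv hFv hr
  refine ⟨_, ?_, hr.mul (hG'.rpow_const (p := 1 - α) (Or.inl hG.ne'))⟩
  have hval : ρ * (1 - F v) ^ (1 - α) +
      (1 - F v) / f v * (-f v * (1 - α) * (1 - F v) ^ (1 - α - 1)) =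
        (1 - F v) ^ (1 - α) * (ρ - (1 - α)) := by
    rw [Real.rpow_sub_one hG.ne']
    field_simp
    ring
  rw [hval]
  exact mul_nonpos_of_nonneg_of_nonpos (Real.rpow_nonneg hG.le _) (by linarith)

lemma antitoneOn_weight (hSR : IsAlphaSR α F f) (hcdf : IsCDF F f)
    (hfd : ∀ v, 0 ≤ v → DifferentiableAt ℝ f v) :
    AntitoneOn (weight α F f) {v ∈ Ici 0 | F v < 1} := by
  have hderiv : ∀ v ∈ {v ∈ Ici 0 | F v < 1}, ∃ m ≤ 0, HasDerivAt (weight α F f) m v :=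
    fun v hv => hSR.exists_hasDerivAt_weight_nonpos hcdf (hfd v hv.1) hv.1 hv.2
  refine antitoneOn_of_deriv_nonpos ((hcdf.mono.monotoneOn _).convex_lt (convex_Ici 0) 1)
    (fun v hv => ?_) (fun v hv => ?_) (fun v hv => ?_)
  · obtain ⟨m, -, hm⟩ := hderiv v hv
    exact hm.continuousAt.continuousWithinAt
  · obtain ⟨m, -, hm⟩ := hderiv v (interior_subset hv)
    exact hm.differentiableAt.differentiableWithinAt
  · obtain ⟨m, hm0, hm⟩ := hderiv v (interior_subset hv)
    exact hm.deriv ▸ hm0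

lemma weight_mul_le (hSR : IsAlphaSR α F f) (hcdf : IsCDF F f)
    (hfd : ∀ v, 0 ≤ v → DifferentiableAt ℝ f v) (hα : 0 < α)
    (hs0 : 0 ≤ s) (hs : (1 + α) * (1 - F s) = α) (hv : 0 ≤ v) (hFv : F v < 1) :
    weight α F f s * (f v * potentialDeriv α (1 - F v)) ≤
      (1 + α) / α * (1 - F v) ^ 2 - (1 - F v) := by
  rw [← hcdf.weight_mul_potentialDeriv hα.ne' hv hFv, ← sub_nonneg, ← sub_mul]
  have hG : 0 ≤ 1 - F v := sub_nonneg.2 hFv.le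
  have hf : 0 ≤ f v := (hcdf.f_pos v hv hFv).le
  have hanti := hSR.antitoneOn_weight hcdf hfd
  have hvD : v ∈ {v ∈ Ici 0 | F v < 1} := ⟨hv, hFv⟩
  have hsD : s ∈ {v ∈ Ici 0 | F v < 1} := ⟨hs0, by nlinarith⟩
  rcases le_total v s with hvs | hsv
  · have hFvs := hcdf.mono hvs
    exact mul_nonneg (sub_nonneg.2 (hanti hvD hsD hvs))
      (mul_nonneg hf (potentialDeriv_nonneg hα hG (by nlinarith)))
  · have hFsv := hcdf.mono hsv
    exact mul_nonneg_of_nonpos_of_nonpos (sub_nonpos.2 (hanti hsD hvD hsv))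
      (mul_nonpos_of_nonneg_of_nonpos hf (potentialDeriv_nonpos hα hG (by nlinarith)))

lemma neg_weight_mul_potential_le_integral_of_lt_one (hSR : IsAlphaSR α F f) (hcdf : IsCDF F f)
    (hfd : ∀ v, 0 ≤ v → DifferentiableAt ℝ f v) (hα : 0 < α)
    (hs0 : 0 ≤ s) (hs : (1 + α) * (1 - F s) = α) (hb : 0 ≤ b) (hFb : ∀ v < b, F v < 1) :
    -(weight α F f s * potential α (1 - F b)) ≤
      ∫ v in 0..b, ((1 + α) / α * (1 - F v) ^ 2 - (1 - F v)) := by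
  have hFc : ContinuousOn F (Icc 0 b) := hcdf.continuousOn.mono Icc_subset_Ici_self
  have hΦ := continuous_potential hα.le
  have h := intervalIntegral.sub_le_integral_of_hasDeriv_right_of_le hb
    (g := fun v => -(weight α F f s * potential α (1 - F v)))
    (g' := fun v => weight α F f s * (f v * potentialDeriv α (1 - F v)))
    (φ := fun v => (1 + α) / α * (1 - F v) ^ 2 - (1 - F v))
    (by fun_prop) (fun v hv => ?_) (ContinuousOn.integrableOn_Icc (by fun_prop))
    (fun v hv => hSR.weight_mul_le hcdf hfd hα hs0 hs hv.1.le (hFb v hv.2))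
  · simpa [hcdf.zero, potential_one] using h
  · have hG : HasDerivAt (fun w => 1 - F w) (-f v) v := (hcdf.hasDeriv v hv.1.le).const_sub 1
    refine (((hasDerivAt_potential (sub_pos.2 (hFb v hv.2))).comp v hG).const_mul _).neg
      |>.congr_deriv ?_ |>.hasDerivWithinAt
    ring

lemma neg_weight_mul_potential_le_integral (hSR : IsAlphaSR α F f) (hcdf : IsCDF F f)
    (hfd : ∀ v, 0 ≤ v → DifferentiableAt ℝ f v) (hα : 0 < α)
    (hs0 : 0 ≤ s) (hs : (1 + α) * (1 - F s) = α) (hb : 0 ≤ b) :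
    -(weight α F f s * potential α (1 - F b)) ≤
      ∫ v in 0..b, ((1 + α) / α * (1 - F v) ^ 2 - (1 - F v)) := by
  by_cases hFb : ∀ v < b, F v < 1
  · exact hSR.neg_weight_mul_potential_le_integral_of_lt_one hcdf hfd hα hs0 hs hb hFb
  -- past the first point `c` where `F` reaches `1`, both the integrand and the potential vanish
  obtain ⟨w, hwb, hFw⟩ : ∃ w < b, F w = 1 := by
    push Not at hFb
    exact hFb.imp fun w hw => ⟨hw.1, le_antisymm (hcdf.le_one w) hw.2⟩
  obtain ⟨c, hcw, hFc, hlt⟩ := hcdf.exists_first_eq_one hFw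
  have hc0 := hcdf.nonneg_of_eq_one hFc
  have hone : ∀ v, c ≤ v → 1 - F v = 0 := fun v hv =>
    sub_eq_zero.2 (le_antisymm (hcdf.le_one v) (hFc ▸ hcdf.mono hv)).symm
  have hint : ∀ x y, 0 ≤ x → x ≤ y → IntervalIntegrable
      (fun v => (1 + α) / α * (1 - F v) ^ 2 - (1 - F v)) volume x y := fun x y hx hxy =>
    ContinuousOn.intervalIntegrable_of_Icc hxy
      (by have := hcdf.continuousOn.mono (Icc_subset_Ici_iff hxy |>.2 hx); fun_prop)
  have htail : ∫ v in c..b, ((1 + α) / α * (1 - F v) ^ 2 - (1 - F v)) = 0 := by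
    refine intervalIntegral.integral_zero_ae (Eventually.of_forall fun v hv => ?_)
    rw [uIoc_of_le (hcw.trans hwb.le)] at hv
    simp [hone v hv.1.le]
  have hhead := hSR.neg_weight_mul_potential_le_integral_of_lt_one hcdf hfd hα hs0 hs hc0 hlt
  rw [hone c le_rfl, potential_zero hα.ne', mul_zero, neg_zero] at hhead
  rw [hone b (hcw.trans hwb.le), potential_zero hα.ne', mul_zero, neg_zero,
    ← intervalIntegral.integral_add_adjacent_intervals (hint 0 c le_rfl hc0)
      (hint c b hc0 (hcw.trans hwb.le)), htail, add_zero]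
  exact hhead

theorem integral_one_sub_le (hSR : IsAlphaSR α F f) (hcdf : IsCDF F f)
    (hfd : ∀ v, 0 ≤ v → DifferentiableAt ℝ f v) (hα : 0 < α)
    (hmean : IntegrableOn (fun v => 1 - F v) (Ioi 0)) :
    ∫ v in Ioi 0, (1 - F v) ≤ (1 + α) / α * ∫ v in Ioi 0, (1 - F v) ^ 2 := by
  obtain ⟨s, hs0, hFs⟩ := hcdf.exists_eq (p := 1 / (1 + α)) (by positivity)
    ((div_lt_one (by positivity)).2 (by linarith))
  have hs : (1 + α) * (1 - F s) = α := by rw [hFs]; field_simp; ring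
  have hsq := hcdf.integrableOn_sq hmean
  have hlim : Tendsto (fun b => ∫ v in 0..b, ((1 + α) / α * (1 - F v) ^ 2 - (1 - F v))) atTop
      (𝓝 (∫ v in Ioi 0, ((1 + α) / α * (1 - F v) ^ 2 - (1 - F v)))) :=
    intervalIntegral_tendsto_integral_Ioi 0 ((hsq.const_mul _).sub hmean) tendsto_id
  have hpot : Tendsto (fun b => -(weight α F f s * potential α (1 - F b))) atTop (𝓝 0) := by
    have hG : Tendsto (fun b => 1 - F b) atTop (𝓝 0) := by
      simpa using hcdf.tendsto_one.const_sub 1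
    simpa [potential_zero hα.ne'] using
      (((continuous_potential hα.le).tendsto 0).comp hG).const_mul (weight α F f s) |>.neg
  have hJ := le_of_tendsto_of_tendsto hpot hlim <| (eventually_ge_atTop 0).mono fun b hb =>
    hSR.neg_weight_mul_potential_le_integral hcdf hfd hα hs0 hs hb
  rw [integral_sub (hsq.const_mul _) hmean, integral_const_mul] at hJ
  linarith

end IsAlphaSR

theorem max_le_min_bound_general (α : ℝ) (F f : ℝ → ℝ)
    (hα0 : 0 < α)
    (hcdf : IsCDF F f)
    (hfd : ∀ v, 0 ≤ v → DifferentiableAt ℝ f v)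
    (hSR : IsAlphaSR α F f)
    (hmean : IntegrableOn (fun v => 1 - F v) (Set.Ioi 0)) :
    ∫ x in Set.Ioi (0 : ℝ), (1 - (F x) ^ 2) ≤
      ((2 + α) / α) * ∫ x in Set.Ioi (0 : ℝ), (1 - F x) ^ 2 := by
  have hsq := hcdf.integrableOn_sq hmean
  have hmin := hSR.integral_one_sub_le hcdf hfd hα0 hmean
  have hmax : ∫ x in Ioi 0, (1 - F x ^ 2) =
      2 * (∫ x in Ioi 0, (1 - F x)) - ∫ x in Ioi 0, (1 - F x) ^ 2 := by
    rw [← integral_const_mul, ← integral_sub (hmean.const_mul 2) hsq]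
    exact integral_congr_ae (Eventually.of_forall fun x => by ring)
  have hcoef : (2 + α) / α = 2 * ((1 + α) / α) - 1 := by field_simp; ring
  rw [hmax, hcoef, sub_mul, one_mul, mul_assoc]
  linarith

/-- `E[max{v₁,v₂}] ≤ ((2+α)/α) · E[min{v₁,v₂}]` for `v₁, v₂` i.i.d. with CDF `F`,
stated in the equivalent integrated-survival form:
`∫₀^∞ (1 − F(x)²) dx ≤ ((2+α)/α) · ∫₀^∞ (1 − F(x))² dx`. -/
theorem max_le_min_bound (α : ℝ) (F f : ℝ → ℝ)
    (hα0 : 0 < α) (hα1 : α < 1)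
    (hcdf : IsCDF F f)
    (hfd : ∀ v, 0 ≤ v → DifferentiableAt ℝ f v)
    (hSR : IsAlphaSR α F f)
    (hmean : IntegrableOn (fun v => 1 - F v) (Set.Ioi 0)) :
    ∫ x in Set.Ioi (0 : ℝ), (1 - (F x) ^ 2) ≤
      ((2 + α) / α) * ∫ x in Set.Ioi (0 : ℝ), (1 - F x) ^ 2 :=
  max_le_min_bound_general α F f hα0 hcdf hfd hSR hmean
end

section
/- Let 0 < α < 1, let F be α-SR, and let r > 0 be a monopoly price of F, i.e. φ(r) = 0. Then 1 − F(r) ≥ α^{1/(1−α)}. -/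
open MeasureTheory Real Filter

/-!
With `φ(r) = 0`, strong regularity between `v` and `r` gives `1 / h(v) = v - φ(v) ≥ v + α (r - v)`,
so the hazard rate is at most `1 / ((1 - α) v + α r)` on `[0, r]`. Integrating over `[0, r]`,
`-log (1 - F r) = ∫₀ʳ h ≤ (1 - α)⁻¹ log (r / (α r))`, i.e. `1 - F r ≥ α ^ (1 / (1 - α))`.
-/

lemma lt_one_of_virtualValue_eq_zero {F f : ℝ → ℝ} {r : ℝ} (hle : F r ≤ 1) (hr : r ≠ 0)
    (h : virtualValue F f r = 0) : F r < 1 := by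
  refine hle.lt_of_ne fun hF => hr ?_
  simpa [virtualValue, hF] using h

lemma hazardRate_le_of_isAlphaSR {α r v : ℝ} {F f : ℝ → ℝ} (hα0 : 0 < α)
    (hcdf : IsCDF F f) (hSR : IsAlphaSR α F f) (hFr : F r < 1) (hmon : virtualValue F f r = 0)
    (hv0 : 0 ≤ v) (hvr : v < r) :
    hazardRate F f v ≤ ((1 - α) * v + α * r)⁻¹ := by
  have hfv : 0 < f v := hcdf.f_pos v hv0 ((hcdf.mono hvr.le).trans_lt hFr)
  have hpos : 0 < (1 - α) * v + α * r := by nlinarith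
  have hinv : (1 - α) * v + α * r ≤ (1 - F v) / f v := by
    have := hSR v r hv0 hvr hFr
    rw [hmon, virtualValue] at this
    linarith
  rw [hazardRate, ← inv_div]
  exact inv_anti₀ hpos hinv

lemma monotoneOn_log_one_sub_add {F f k k' : ℝ → ℝ} {a b : ℝ}
    (hF : ∀ v ∈ Set.Icc a b, HasDerivAt F (f v) v) (hF1 : ∀ v ∈ Set.Icc a b, F v < 1)
    (hk : ∀ v ∈ Set.Icc a b, HasDerivAt k (k' v) v)
    (hhaz : ∀ v ∈ Set.Ioo a b, hazardRate F f v ≤ k' v) :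
    MonotoneOn (fun v => Real.log (1 - F v) + k v) (Set.Icc a b) := by
  have hderiv : ∀ v ∈ Set.Icc a b,
      HasDerivAt (fun v => Real.log (1 - F v) + k v) (k' v - hazardRate F f v) v := by
    intro v hv
    have hlog := ((hF v hv).const_sub 1).log (sub_ne_zero.2 (hF1 v hv).ne')
    exact (hlog.add (hk v hv)).congr_deriv (by rw [hazardRate]; ring)
  refine monotoneOn_of_hasDerivWithinAt_nonneg (f' := fun v => k' v - hazardRate F f v)
    (convex_Icc a b) (fun v hv => (hderiv v hv).continuousAt.continuousWithinAt)
    (fun v hv => ?_) (fun v hv => ?_)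
  all_goals rw [interior_Icc] at hv
  · exact (hderiv v (Set.Ioo_subset_Icc_self hv)).hasDerivWithinAt
  · exact sub_nonneg.2 (hhaz v hv)

lemma hasDerivAt_inv_mul_log_affine {c d v : ℝ} (hc : c ≠ 0) (hv : c * v + d ≠ 0) :
    HasDerivAt (fun x => c⁻¹ * Real.log (c * x + d)) (c * v + d)⁻¹ v := by
  have hlin : HasDerivAt (fun x => c * x + d) c v := by
    simpa using ((hasDerivAt_id v).const_mul c).add_const d
  exact ((hlin.log hv).const_mul c⁻¹).congr_deriv (by field_simp)

theorem reserve_quantile_bound (α : ℝ) (F f : ℝ → ℝ)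
    (hα0 : 0 < α) (hα1 : α < 1)
    (hcdf : IsCDF F f) (hSR : IsAlphaSR α F f)
    (r : ℝ) (hr : 0 < r) (hmon : virtualValue F f r = 0) :
    1 - F r ≥ α ^ (1 / (1 - α) : ℝ) := by
  have h1α : 0 < 1 - α := sub_pos.2 hα1
  have hFr : F r < 1 := lt_one_of_virtualValue_eq_zero (hcdf.le_one r) hr.ne' hmon
  have hpos : ∀ v ∈ Set.Icc 0 r, 0 < (1 - α) * v + α * r := fun v hv => by nlinarith [hv.1]
  have hmono := monotoneOn_log_one_sub_add
    (k := fun v => (1 - α)⁻¹ * Real.log ((1 - α) * v + α * r))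
    (fun v hv => hcdf.hasDeriv v hv.1) (fun v hv => (hcdf.mono hv.2).trans_lt hFr)
    (fun v hv => hasDerivAt_inv_mul_log_affine h1α.ne' (hpos v hv).ne')
    (fun v hv => hazardRate_le_of_isAlphaSR hα0 hcdf hSR hFr hmon hv.1.le hv.2)
  have hlog : (1 - α)⁻¹ * Real.log α ≤ Real.log (1 - F r) := by
    have h0r := hmono (Set.left_mem_Icc.2 hr.le) (Set.right_mem_Icc.2 hr.le) hr.le
    simp only [hcdf.zero, sub_zero, Real.log_one, mul_zero, zero_add,
      show (1 - α) * r + α * r = r by ring, Real.log_mul hα0.ne' hr.ne'] at h0r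
    linarith
  calc α ^ (1 / (1 - α) : ℝ) = Real.exp ((1 - α)⁻¹ * Real.log α) := by
        rw [Real.rpow_def_of_pos hα0, one_div, mul_comm]
    _ ≤ 1 - F r := by
        rw [← Real.exp_log (sub_pos.2 hFr)]
        exact Real.exp_le_exp.2 hlog
end

section
/- Let 0 < α < 1, let F be α-SR, and let r > 0 be a monopoly price of F, i.e. φ(r) = 0. Then for every v ≥ r with F(v) < 1, the revenue curve satisfies (1−F(v))·v ≤ (1−F(r))·r · (1/(1−α)) · ( ((1−F(v))/(1−F(r)))^α − α·(1−F(v))/(1−F(r)) ). (In quantile notation with R(q) = q·v(q): for q ≤ q(r), R(q) ≤ R(q(r)) · (1/(1−α)) · ((q/q(r))^α − α·q/q(r)).) -/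
open MeasureTheory Real Filter

/-!
Strong regularity together with `φ(r) = 0` gives `φ(x) ≥ α (x - r)` for `x ≥ r`, i.e. the hazard
rate is at least `1 / ((1 - α) x + α r)`. Integrating this bound on `log (1 - F)` shows that
`(1 - F x) · ((1 - α) x + α r) ^ (1 / (1 - α))` is nonincreasing on `[r, v]`; comparing its values
at `r` and `v` and multiplying by `1 - F v` gives the bound.
-/

section

variable {α r x : ℝ} {F f : ℝ → ℝ}

theorem IsAlphaSR.div_le_of_virtualValue_eq_zero (hSR : IsAlphaSR α F f) (hr : 0 ≤ r)
    (hmon : virtualValue F f r = 0) (hrx : r ≤ x) (hx : F x < 1) :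
    (1 - F x) / f x ≤ (1 - α) * x + α * r := by
  rcases hrx.eq_or_lt with rfl | hlt
  · unfold virtualValue at hmon
    linarith
  · have := hSR r x hr hlt hx
    unfold virtualValue at this hmon
    linarith

theorem IsCDF.hasDerivAt_log_survival (hcdf : IsCDF F f) (hx0 : 0 ≤ x) (hx : F x < 1) :
    HasDerivAt (fun y => log (1 - F y)) (-hazardRate F f x) x := by
  have := ((hcdf.hasDeriv x hx0).const_sub 1).log (by linarith)
  simpa only [hazardRate, neg_div] using this

theorem IsAlphaSR.inv_le_hazardRate (hSR : IsAlphaSR α F f) (hcdf : IsCDF F f) (hr : 0 ≤ r)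
    (hmon : virtualValue F f r = 0) (hrx : r ≤ x) (hx : F x < 1) :
    ((1 - α) * x + α * r)⁻¹ ≤ hazardRate F f x := by
  rw [hazardRate, ← inv_div]
  exact inv_anti₀ (div_pos (by linarith) (hcdf.f_pos x (hr.trans hrx) hx))
    (hSR.div_le_of_virtualValue_eq_zero hr hmon hrx hx)

theorem IsCDF.antitoneOn_log_survival_add_log_div (hcdf : IsCDF F f) (hSR : IsAlphaSR α F f)
    (hr : 0 < r) (hmon : virtualValue F f r = 0) (hα : α < 1) {v : ℝ} (hv : F v < 1) :
    AntitoneOn (fun x => log (1 - F x) + log ((1 - α) * x + α * r) / (1 - α)) (Set.Icc r v) := by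
  have hderiv : ∀ x ∈ Set.Icc r v,
      HasDerivAt (fun x => log (1 - F x) + log ((1 - α) * x + α * r) / (1 - α))
        (-hazardRate F f x + ((1 - α) * x + α * r)⁻¹) x := by
    intro x hx
    have hA : 0 < (1 - α) * x + α * r := by nlinarith [hx.1]
    have hlin : HasDerivAt (fun x => (1 - α) * x + α * r) (1 - α) x := by
      simpa using ((hasDerivAt_id x).const_mul (1 - α)).add_const (α * r)
    refine (hcdf.hasDerivAt_log_survival (hr.le.trans hx.1) ((hcdf.mono hx.2).trans_lt hv)).add
      ((hlin.log hA.ne').div_const (1 - α)) |>.congr_deriv ?_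
    field_simp [(sub_pos.2 hα).ne']
  apply antitoneOn_of_hasDerivWithinAt_nonpos (convex_Icc r v)
  · exact fun x hx => (hderiv x hx).continuousAt.continuousWithinAt
  · intro x hx
    rw [interior_Icc] at hx
    exact (hderiv x (Set.Ioo_subset_Icc_self hx)).hasDerivWithinAt
  · intro x hx
    rw [interior_Icc] at hx
    have := hSR.inv_le_hazardRate hcdf hr.le hmon hx.1.le ((hcdf.mono hx.2.le).trans_lt hv)
    linarith

end

theorem le_mul_rpow_of_log_add_log_div_le {α r A q₀ q : ℝ} (hα : α < 1) (hr : 0 < r)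
    (hA : 0 < A) (hq₀ : 0 < q₀) (hq : 0 < q)
    (h : log q + log A / (1 - α) ≤ log q₀ + log r / (1 - α)) :
    A ≤ r * (q / q₀) ^ (α - 1) := by
  have h1α : 0 < 1 - α := sub_pos.2 hα
  have ht : 0 < q / q₀ := div_pos hq hq₀
  rw [← log_le_log_iff hA (by positivity), log_mul hr.ne' (by positivity), log_rpow ht,
    log_div hq.ne' hq₀.ne']
  have h' := mul_le_mul_of_nonneg_left h h1α.le
  rw [mul_add, mul_add, mul_div_cancel₀ _ h1α.ne', mul_div_cancel₀ _ h1α.ne'] at h'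
  linarith

theorem mul_le_of_le_mul_rpow {α r v q₀ q : ℝ} (hα : α < 1) (hq₀ : 0 < q₀) (hq : 0 < q)
    (h : (1 - α) * v + α * r ≤ r * (q / q₀) ^ (α - 1)) :
    q * v ≤ q₀ * r * (1 / (1 - α)) * ((q / q₀) ^ α - α * (q / q₀)) := by
  set t := q / q₀
  have ht : 0 < t := div_pos hq hq₀
  have hq_eq : q = t * q₀ := (div_mul_cancel₀ q hq₀.ne').symm
  have hpow : t * t ^ (α - 1) = t ^ α := by
    rw [rpow_sub_one ht.ne', mul_div_cancel₀ _ ht.ne']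
  have h1α : 0 < 1 - α := sub_pos.2 hα
  rw [← mul_le_mul_iff_of_pos_left h1α]
  calc (1 - α) * (q * v) = q * ((1 - α) * v + α * r) - α * r * q := by ring
    _ ≤ q * (r * t ^ (α - 1)) - α * r * q := by gcongr
    _ = q₀ * r * (t * t ^ (α - 1) - α * t) := by rw [hq_eq]; ring
    _ = (1 - α) * (q₀ * r * (1 / (1 - α)) * (t ^ α - α * t)) := by
      rw [hpow]; field_simp

theorem revenue_curve_upper_bound_general (α : ℝ) (F f : ℝ → ℝ)
    (hα1 : α < 1)
    (hcdf : IsCDF F f) (hSR : IsAlphaSR α F f)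
    (r : ℝ) (hr : 0 < r) (hmon : virtualValue F f r = 0)
    (v : ℝ) (hrv : r ≤ v) (hv : F v < 1) :
    (1 - F v) * v ≤
      (1 - F r) * r * (1 / (1 - α)) *
        (((1 - F v) / (1 - F r)) ^ (α : ℝ) - α * ((1 - F v) / (1 - F r))) := by
  have hFr : F r < 1 := (hcdf.mono hrv).trans_lt hv
  have hpotential := hcdf.antitoneOn_log_survival_add_log_div hSR hr hmon hα1 hv
    (Set.left_mem_Icc.2 hrv) (Set.right_mem_Icc.2 hrv) hrv
  have hA : 0 < (1 - α) * v + α * r := by nlinarith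
  apply mul_le_of_le_mul_rpow hα1 (by linarith) (by linarith)
  refine le_mul_rpow_of_log_add_log_div_le hα1 hr hA (by linarith) (by linarith) ?_
  simpa [show (1 - α) * r + α * r = r by ring] using hpotential

theorem revenue_curve_upper_bound (α : ℝ) (F f : ℝ → ℝ)
    (hα0 : 0 < α) (hα1 : α < 1)
    (hcdf : IsCDF F f) (hSR : IsAlphaSR α F f)
    (r : ℝ) (hr : 0 < r) (hmon : virtualValue F f r = 0)
    (v : ℝ) (hrv : r ≤ v) (hv : F v < 1) :
    (1 - F v) * v ≤
      (1 - F r) * r * (1 / (1 - α)) *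
        (((1 - F v) / (1 - F r)) ^ (α : ℝ) - α * ((1 - F v) / (1 - F r))) :=
  revenue_curve_upper_bound_general α F f hα1 hcdf hSR r hr hmon v hrv hv
end

section
/- Let 0 < α < 1, let F be α-SR with monopoly price r > 0 (φ(r) = 0), and write q(v) = 1−F(v). Let γ > 0 satisfy 8γ < α, and set s = √(8γ/α). Suppose r̄ ≥ 0 and numbers q̄_r, q̄_{r̄} ∈ [0,1] (the empirical quantiles of r and r̄) satisfy: q(r) ∈ [q̄_r/(1+γ)², q̄_r·(1+γ)²], q(r̄) ∈ [q̄_{r̄}/(1+γ)², q̄_{r̄}·(1+γ)²], and q̄_{r̄}·r̄ ≥ q̄_r·r (r̄ has at least as large empirical revenue as r). Then q(r̄) ≥ (1 − s)·q(r), i.e. the quantile of the empirical reserve price is at least a (1 − √(8γ/α)) fraction of the quantile of the true monopoly price. -/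
open MeasureTheory Real Filter

/-!
Beyond the monopoly price `r`, strong regularity bounds the virtual value below by the drop in
quantile, `q(r) φ(v) ≥ α r (q(r) - q(v))`: for `w ∈ [r, v]` the hazard-rate bound
`q(w) / f(w) = w - φ(w) ≥ (1 - α) w + α v - φ(v)` caps the density, hence `q(r) - q(v)`.
As the revenue curve `v q(v)` has derivative `-f φ`, integrating gives a quadratic revenue loss
`α r (q(r) - q(v))² ≤ 2 q(r) (r q(r) - v q(v))`. The quantile windows lose at most a factor
`(1 + γ)⁴ ≤ 1 / (1 - 4γ)` in revenue, so `r̄` loses at most `4γ r q(r)`, which forces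
`(q(r) - q(r̄))² ≤ (8γ/α) q(r)²`.
-/

open Set

lemma le_of_hasDerivAt_nonpos {g g' : ℝ → ℝ} {a b : ℝ} (hab : a ≤ b)
    (hg : ∀ x ∈ Icc a b, HasDerivAt g (g' x) x) (hg' : ∀ x ∈ Ioo a b, g' x ≤ 0) :
    g b ≤ g a :=
  antitoneOn_of_hasDerivWithinAt_nonpos (convex_Icc a b)
    (fun x hx => (hg x hx).continuousAt.continuousWithinAt)
    (fun x hx => (hg x (interior_subset hx)).hasDerivWithinAt)
    (fun x hx => hg' x (by rwa [interior_Icc] at hx))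
    (left_mem_Icc.2 hab) (right_mem_Icc.2 hab) hab

lemma sub_le_four_mul_of_le_one_add_pow_mul {γ x y : ℝ} (hγ : 0 ≤ γ) (hx : 0 ≤ x)
    (hy : 0 ≤ y) (h : x ≤ ((1 + γ) ^ 2) ^ 2 * y) :
    x - y ≤ 4 * γ * x := by
  have hbernoulli : (1 - 4 * γ) * ((1 + γ) ^ 2) ^ 2 ≤ 1 := by
    nlinarith [pow_nonneg hγ 2, pow_nonneg hγ 3, pow_nonneg hγ 4, pow_nonneg hγ 5]
  rcases le_total 0 (1 - 4 * γ) with hγ4 | hγ4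
  · nlinarith [mul_le_mul_of_nonneg_left h hγ4]
  · nlinarith

lemma le_sqrt_mul_of_sq_le_mul_sq {k x y : ℝ} (hy : 0 ≤ y) (h : x ^ 2 ≤ k * y ^ 2) :
    x ≤ √k * y :=
  calc x ≤ |x| := le_abs_self x
    _ ≤ √(k * y ^ 2) := Real.abs_le_sqrt h
    _ = √k * y := by rw [Real.sqrt_mul' _ (sq_nonneg y), Real.sqrt_sq hy]

lemma revenue_le_of_empirical_revenue_le {c r r' q q' e e' : ℝ} (hc : 0 < c) (hr : 0 ≤ r)
    (hr' : 0 ≤ r') (hq : q ≤ e * c) (hq' : e' / c ≤ q') (hrev : e' * r' ≥ e * r) :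
    r * q ≤ c ^ 2 * (r' * q') := by
  have he' : e' ≤ q' * c := (div_le_iff₀ hc).1 hq'
  calc r * q ≤ c * (e * r) := by nlinarith
    _ ≤ c * (e' * r') := by gcongr
    _ ≤ c * (q' * c * r') := by gcongr
    _ = c ^ 2 * (r' * q') := by ring

section

variable {α : ℝ} {F f : ℝ → ℝ} {r v w : ℝ}

lemma IsCDF.one_sub_pos_of_virtualValue_eq_zero (hcdf : IsCDF F f) (hv : v ≠ 0)
    (hφ : virtualValue F f v = 0) : 0 < 1 - F v := by
  refine sub_pos.2 ((hcdf.le_one v).lt_of_ne fun h => hv ?_)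
  simpa [virtualValue, h] using hφ

lemma IsCDF.density_mul_sub_virtualValue (hcdf : IsCDF F f) (hv : 0 ≤ v) (hFv : F v < 1) :
    f v * (v - virtualValue F f v) = 1 - F v := by
  have := (hcdf.f_pos v hv hFv).ne'
  simp only [virtualValue, sub_sub_cancel]
  field_simp

lemma IsAlphaSR.virtualValue_add_le (hSR : IsAlphaSR α F f) (hw : 0 ≤ w) (hwv : w ≤ v)
    (hFv : F v < 1) :
    virtualValue F f w + α * (v - w) ≤ virtualValue F f v := by
  rcases hwv.eq_or_lt with rfl | hlt
  · simp
  · linarith [hSR w v hw hlt hFv]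

lemma IsAlphaSR.density_mul_le (hcdf : IsCDF F f) (hSR : IsAlphaSR α F f) (hw : 0 ≤ w)
    (hwv : w ≤ v) (hFv : F v < 1) :
    f w * ((1 - α) * w + α * v - virtualValue F f v) ≤ 1 - F w := by
  have hFw : F w < 1 := (hcdf.mono hwv).trans_lt hFv
  rw [← hcdf.density_mul_sub_virtualValue hw hFw]
  have := hSR.virtualValue_add_le hw hwv hFv
  exact mul_le_mul_of_nonneg_left (by linarith) (hcdf.f_pos w hw hFw).le

lemma IsAlphaSR.mul_sub_le_virtualValue (hcdf : IsCDF F f) (hSR : IsAlphaSR α F f)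
    (hα0 : 0 ≤ α) (hα1 : α ≤ 1) (hr : 0 ≤ r) (hmon : virtualValue F f r = 0) (hrv : r ≤ v)
    (hFv : F v < 1) :
    α * r * (F v - F r) ≤ (1 - F r) * virtualValue F f v := by
  set p := virtualValue F f v
  have hFr : F r ≤ F v := hcdf.mono hrv
  rcases le_or_gt (α * r) p with hp | hp
  · calc α * r * (F v - F r) ≤ α * r * (1 - F r) := by gcongr
      _ ≤ p * (1 - F r) := by gcongr; linarith
      _ = (1 - F r) * p := mul_comm _ _
  have hpv : α * (v - r) ≤ p := by simpa [hmon] using hSR.virtualValue_add_le hr hrv hFv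
  set D := (1 - α) * r + α * v - p
  have hD : 0 < D := by nlinarith [mul_nonneg hα0 (sub_nonneg.2 hrv)]
  -- On `[r, v]` the density is at most `q(r) / D`, so `F` grows at most at that rate.
  have hdens : ∀ w ∈ Icc r v, f w * D ≤ 1 - F r := fun w hw => by
    have hw0 : 0 ≤ w := hr.trans hw.1
    have hfw : 0 ≤ f w := (hcdf.f_pos w hw0 ((hcdf.mono hw.2).trans_lt hFv)).le
    have h1 := hSR.density_mul_le hcdf hw0 hw.2 hFv
    have h2 : f w * D ≤ f w * ((1 - α) * w + α * v - p) :=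
      mul_le_mul_of_nonneg_left (by nlinarith [hw.1]) hfw
    linarith [hcdf.mono hw.1]
  have hgrowth : D * (F v - F r) ≤ (1 - F r) * (v - r) := by
    have := le_of_hasDerivAt_nonpos (g := fun w => D * F w - (1 - F r) * w) hrv
      (fun w hw => ((hcdf.hasDeriv w (hr.trans hw.1)).const_mul D).sub
        ((hasDerivAt_id w).const_mul (1 - F r)))
      (fun w hw => by have := hdens w (Ioo_subset_Icc_self hw); simp only [mul_one]; linarith)
    linarith
  -- `p D - α r (v - r) = (p - α (v - r)) (r - p)`
  have hquad : α * r * (v - r) ≤ p * D := by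
    have hpr : p ≤ r := hp.le.trans (mul_le_of_le_one_left hr hα1)
    nlinarith [mul_nonneg (sub_nonneg.2 hpv) (sub_nonneg.2 hpr)]
  refine le_of_mul_le_mul_left ?_ hD
  calc D * (α * r * (F v - F r)) = α * r * (D * (F v - F r)) := by ring
    _ ≤ α * r * ((1 - F r) * (v - r)) := by gcongr
    _ = (1 - F r) * (α * r * (v - r)) := by ring
    _ ≤ (1 - F r) * (p * D) := by gcongr; linarith
    _ = D * ((1 - F r) * p) := by ring

lemma IsAlphaSR.sq_quantile_gap_le_revenue_loss (hcdf : IsCDF F f) (hSR : IsAlphaSR α F f) (hα0 : 0 ≤ α)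
    (hα1 : α ≤ 1) (hr : 0 ≤ r) (hmon : virtualValue F f r = 0) (hrv : r ≤ v) :
    α * r * (F v - F r) ^ 2 ≤ 2 * (1 - F r) * (r * (1 - F r) - v * (1 - F v)) := by
  have hFr : F r ≤ F v := hcdf.mono hrv
  rcases (hcdf.le_one v).eq_or_lt with hFv | hFv
  · rw [hFv]
    have hqr : 0 ≤ 1 - F r := by linarith
    nlinarith [mul_nonneg (mul_nonneg hr hqr) hqr]
  have hderiv : ∀ w ∈ Icc r v, HasDerivAt
      (fun w => α * r * (F w - F r) ^ 2 + 2 * (1 - F r) * (w * (1 - F w)))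
      (2 * (f w * (α * r * (F w - F r) - (1 - F r) * virtualValue F f w))) w := by
    intro w hw
    have hw0 : 0 ≤ w := hr.trans hw.1
    have hFw := hcdf.hasDeriv w hw0
    have key := hcdf.density_mul_sub_virtualValue hw0 ((hcdf.mono hw.2).trans_lt hFv)
    refine ((((hFw.sub_const (F r)).pow 2).const_mul (α * r)).add
      (((hasDerivAt_id' w).mul (hFw.const_sub 1)).const_mul
        (2 * (1 - F r)))).congr_deriv ?_
    push_cast
    linear_combination (-2 * (1 - F r)) * key
  have := le_of_hasDerivAt_nonpos hrv hderiv fun w hw => by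
    have hw0 : 0 ≤ w := hr.trans hw.1.le
    have hFw : F w < 1 := (hcdf.mono hw.2.le).trans_lt hFv
    have := hSR.mul_sub_le_virtualValue hcdf hα0 hα1 hr hmon hw.1.le hFw
    nlinarith [(hcdf.f_pos w hw0 hFw).le]
  simp only [sub_self] at this
  linarith

end

theorem empirical_reserve_quantile_bound_general (α γ : ℝ) (F f : ℝ → ℝ)
    (hα0 : 0 < α) (hα1 : α < 1)
    (hcdf : IsCDF F f) (hSR : IsAlphaSR α F f)
    (r : ℝ) (hr : 0 < r) (hmon : virtualValue F f r = 0)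
    (hγ : 0 < γ)
    (rbar : ℝ) (hrbar : 0 ≤ rbar)
    (qbar_r qbar_rbar : ℝ)
    (hwin_r : qbar_r / (1 + γ) ^ 2 ≤ 1 - F r ∧ 1 - F r ≤ qbar_r * (1 + γ) ^ 2)
    (hwin_rbar : qbar_rbar / (1 + γ) ^ 2 ≤ 1 - F rbar ∧
      1 - F rbar ≤ qbar_rbar * (1 + γ) ^ 2)
    (hrev : qbar_rbar * rbar ≥ qbar_r * r) :
    1 - F rbar ≥ (1 - Real.sqrt (8 * γ / α)) * (1 - F r) := by
  have hqr : 0 < 1 - F r := hcdf.one_sub_pos_of_virtualValue_eq_zero hr.ne' hmon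
  rcases le_total rbar r with hle | hle
  · nlinarith [hcdf.mono hle, Real.sqrt_nonneg (8 * γ / α)]
  have hrevenue := revenue_le_of_empirical_revenue_le (by positivity) hr.le hrbar
    hwin_r.2 hwin_rbar.1 hrev
  have hloss := sub_le_four_mul_of_le_one_add_pow_mul hγ.le (mul_pos hr hqr).le
    (mul_nonneg hrbar (sub_nonneg.2 (hcdf.le_one rbar))) hrevenue
  have hsq : (F rbar - F r) ^ 2 ≤ 8 * γ / α * (1 - F r) ^ 2 := by
    rw [div_mul_eq_mul_div, le_div_iff₀ hα0]
    refine le_of_mul_le_mul_left ?_ hr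
    nlinarith [hSR.sq_quantile_gap_le_revenue_loss hcdf hα0.le hα1.le hr.le hmon hle]
  linarith [le_sqrt_mul_of_sq_le_mul_sq hqr.le hsq]

theorem empirical_reserve_quantile_bound (α γ : ℝ) (F f : ℝ → ℝ)
    (hα0 : 0 < α) (hα1 : α < 1)
    (hcdf : IsCDF F f) (hSR : IsAlphaSR α F f)
    (r : ℝ) (hr : 0 < r) (hmon : virtualValue F f r = 0)
    (hγ : 0 < γ) (hγα : 8 * γ < α)
    (rbar : ℝ) (hrbar : 0 ≤ rbar)
    (qbar_r qbar_rbar : ℝ)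
    (hqr0 : 0 ≤ qbar_r) (hqr1 : qbar_r ≤ 1)
    (hqrb0 : 0 ≤ qbar_rbar) (hqrb1 : qbar_rbar ≤ 1)
    (hwin_r : qbar_r / (1 + γ) ^ 2 ≤ 1 - F r ∧ 1 - F r ≤ qbar_r * (1 + γ) ^ 2)
    (hwin_rbar : qbar_rbar / (1 + γ) ^ 2 ≤ 1 - F rbar ∧
      1 - F rbar ≤ qbar_rbar * (1 + γ) ^ 2)
    (hrev : qbar_rbar * rbar ≥ qbar_r * r) :
    1 - F rbar ≥ (1 - Real.sqrt (8 * γ / α)) * (1 - F r) :=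
  empirical_reserve_quantile_bound_general α γ F f hα0 hα1 hcdf hSR r hr hmon hγ rbar hrbar qbar_r
    qbar_rbar hwin_r hwin_rbar hrev
end
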